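/- Let (X,d) be a compact metric space and f : X → X a homeomorphism. If (X,f) is uniquely ergodic and has the gluing orbit property, then (X,f) is minimal. -/

import Mathlib

/-!
If `f` is not minimal, some orbit of `x` avoids a ball `B(y, ε)`. The Birkhoff averages of the
bump `g p = max (ε - d(p, y)) 0` vanish along this orbit, so any weak limit `ν` of its empirical
measures is an invariant measure with `∫ g dν = 0`. Gluing `k + 1` copies of the point `y` with
gaps at most `M` gives orbit segments of length at most `(k + 1) M` that visit `B(y, ε/2)` at least
`k + 1` times, so a weak limit `ρ` of their empirical measures is invariant with
`∫ g dρ ≥ ε / (2M) > 0`. Hence `ν ≠ ρ`, contradicting unique ergodicity.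
-/

open Filter Set Metric

namespace Paper

variable {X : Type*}

/-- Integer iteration of a homeomorphism: `f^n` for `n : ℤ`. -/
def zIter [TopologicalSpace X] (f : X ≃ₜ X) (n : ℤ) (x : X) : X :=
  if 0 ≤ n then (⇑f)^[n.toNat] x else (⇑f.symm)^[(-n).toNat] x

/-- `(X,f)` is minimal: every (two-sided) orbit is dense. -/
def Minimal [TopologicalSpace X] (f : X ≃ₜ X) : Prop :=
  ∀ x : X, Dense (Set.range fun n : ℤ => zIter f n x)

/-- Topological transitivity. -/
def TopTransitive [TopologicalSpace X] (f : X ≃ₜ X) : Prop :=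
  ∀ U V : Set X, IsOpen U → IsOpen V → U.Nonempty → V.Nonempty →
    ∃ n : ℤ, (U ∩ (zIter f n) ⁻¹' V).Nonempty

/-- Equicontinuity of the family of forward iterates. -/
def EquicontinuousSystem [MetricSpace X] (f : X → X) : Prop :=
  ∀ ε : ℝ, 0 < ε → ∃ δ : ℝ, 0 < δ ∧
    ∀ x y : X, dist x y < δ → ∀ n : ℕ, dist (f^[n] x) (f^[n] y) < ε

/-- The transition times `s_j` (0-indexed: `s 0 = 0`,
`s (j+1) = s j + m_j + t_j - 1`) for an orbit sequence `C` (with lengths `m_j = (C j).2`)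
and a gap `g`. -/
def sTimes (C : ℕ → X × ℕ) (g : ℕ → ℕ) : ℕ → ℕ
  | 0 => 0
  | j + 1 => sTimes C g j + (C j).2 + g j - 1

/-- `(C, g)` (an orbit sequence of rank `k` together with a gap) is `ε`-shadowed by `z`. -/
def Shadows [MetricSpace X] (f : X → X) (k : ℕ) (C : ℕ → X × ℕ) (g : ℕ → ℕ)
    (ε : ℝ) (z : X) : Prop :=
  ∀ j < k, ∀ l < (C j).2, dist (f^[sTimes C g j + l] z) (f^[l] (C j).1) < ε

/-- The gluing orbit property. -/
def GluingOrbit [MetricSpace X] (f : X → X) : Prop :=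
  ∀ ε : ℝ, 0 < ε → ∃ M : ℕ, 0 < M ∧
    ∀ k : ℕ, 0 < k → ∀ C : ℕ → X × ℕ, (∀ j < k, 0 < (C j).2) →
      ∃ g : ℕ → ℕ, (∀ j < k - 1, 0 < g j ∧ g j ≤ M) ∧
        ∃ z : X, Shadows f k C g ε z

/-- The specification property, at scale `ε` with constant `M`. -/
def SpecWith [MetricSpace X] (f : X → X) (ε : ℝ) (M : ℕ) : Prop :=
  ∀ k : ℕ, 0 < k → ∀ C : ℕ → X × ℕ, (∀ j < k, 0 < (C j).2) →
    ∀ g : ℕ → ℕ, (∀ j < k - 1, M ≤ g j) →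
      ∃ z : X, Shadows f k C g ε z

/-- The specification property. -/
def Specification [MetricSpace X] (f : X → X) : Prop :=
  ∀ ε : ℝ, 0 < ε → ∃ M : ℕ, 0 < M ∧ SpecWith f ε M

/-- The periodic gluing orbit property. -/
def PerGluingOrbit [MetricSpace X] (f : X → X) : Prop :=
  ∀ ε : ℝ, 0 < ε → ∃ M : ℕ, 0 < M ∧
    ∀ k : ℕ, 0 < k → ∀ C : ℕ → X × ℕ, (∀ j < k, 0 < (C j).2) →
      ∃ t : ℕ, 0 < t ∧ t ≤ M ∧
        ∃ g : ℕ → ℕ, (∀ j < k - 1, 0 < g j ∧ g j ≤ M) ∧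
          ∃ z : X, Shadows f k C g ε z ∧
            f^[sTimes C g (k - 1) + (C (k - 1)).2 + t] z = z

/-- `E` is an `(n,ε)`-separated set. -/
def IsSepSet [MetricSpace X] (f : X → X) (n : ℕ) (ε : ℝ) (E : Set X) : Prop :=
  ∀ x ∈ E, ∀ y ∈ E, x ≠ y → ∃ k < n, ε < dist (f^[k] x) (f^[k] y)

/-- `s(n,ε)`: the maximal cardinality of an `(n,ε)`-separated subset of `X`. -/
noncomputable def sepNum [MetricSpace X] (f : X → X) (n : ℕ) (ε : ℝ) : ℕ :=
  sSup {N : ℕ | ∃ E : Finset X, IsSepSet f n ε ↑E ∧ E.card = N}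

/-- Topological entropy `h(f) = lim_{ε → 0⁺} limsup_n (ln s(n,ε))/n`; since the inner
quantity is monotone as `ε` decreases, the limit equals the supremum over `ε > 0`. -/
noncomputable def topEnt [MetricSpace X] (f : X → X) : EReal :=
  ⨆ (ε : ℝ) (_ : 0 < ε),
    Filter.limsup (fun n : ℕ => ((Real.log (sepNum f n ε) / n : ℝ) : EReal)) Filter.atTop

/-- The set of periodic points of period at most `n`. -/
def perPts (f : X → X) (n : ℕ) : Set X :=
  {x | ∃ m : ℕ, 0 < m ∧ m ≤ n ∧ f^[m] x = x}

open Classical in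
/-- `p(f) = limsup_n (ln p_n(f))/n`, the exponential growth rate of periodic points
(`⊤` contributions when there are infinitely many such points). -/
noncomputable def perGrowth (f : X → X) : EReal :=
  Filter.limsup (fun n : ℕ =>
      if h : (perPts f n).Finite then ((Real.log (perPts f n).ncard / n : ℝ) : EReal) else ⊤)
    Filter.atTop

/-- The lower box dimension of `X`, `liminf_{ε→0⁺} ln s(1,ε) / (-ln ε)`. -/
noncomputable def lowerBoxDim [MetricSpace X] (f : X → X) : EReal :=
  Filter.liminf (fun ε : ℝ => ((Real.log (sepNum f 1 ε) / (-Real.log ε) : ℝ) : EReal))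
    (nhdsWithin 0 (Set.Ioi 0))



































/-! Semiflow case -/

/-- `φ` is a continuous semiflow on `X` (for nonnegative times). -/
def IsSemiflow [TopologicalSpace X] (φ : ℝ → X → X) : Prop :=
  (∀ x : X, φ 0 x = x) ∧
    (∀ s t : ℝ, 0 ≤ s → 0 ≤ t → ∀ x : X, φ (s + t) x = φ s (φ t x)) ∧
      Continuous fun p : ℝ × X => φ p.1 p.2

/-- Minimality of a semiflow: every forward orbit is dense. -/
def MinimalFlow [TopologicalSpace X] (φ : ℝ → X → X) : Prop :=
  ∀ x : X, Dense {y : X | ∃ t : ℝ, 0 ≤ t ∧ φ t x = y}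

/-- Transition times for the semiflow gluing: `s 0 = 0`, `s (j+1) = s j + m_j + t_j`. -/
def sFlow (C : ℕ → X × ℝ) (g : ℕ → ℝ) : ℕ → ℝ
  | 0 => 0
  | j + 1 => sFlow C g j + (C j).2 + g j

/-- Gluing orbit property for a semiflow. -/
def GluingFlow [MetricSpace X] (φ : ℝ → X → X) : Prop :=
  ∀ ε : ℝ, 0 < ε → ∃ M : ℝ, 0 < M ∧
    ∀ k : ℕ, 0 < k → ∀ C : ℕ → X × ℝ, (∀ j < k, 0 ≤ (C j).2) →
      ∃ g : ℕ → ℝ, (∀ j < k - 1, 0 ≤ g j ∧ g j ≤ M) ∧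
        ∃ z : X, ∀ j < k, ∀ t ∈ Set.Icc (0 : ℝ) (C j).2,
          dist (φ (sFlow C g j + t) z) (φ t (C j).1) < ε

/-- `E` is a `(T,ε)`-separated set for the semiflow `φ`. -/
def IsSepFlow [MetricSpace X] (φ : ℝ → X → X) (T ε : ℝ) (E : Set X) : Prop :=
  ∀ x ∈ E, ∀ y ∈ E, x ≠ y → ∃ t ∈ Set.Icc (0 : ℝ) T, ε < dist (φ t x) (φ t y)

/-- `s(T,ε)` for the semiflow. -/
noncomputable def sepFlow [MetricSpace X] (φ : ℝ → X → X) (T ε : ℝ) : ℕ :=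
  sSup {N : ℕ | ∃ E : Finset X, IsSepFlow φ T ε ↑E ∧ E.card = N}

/-- Topological entropy of a semiflow. -/
noncomputable def topEntFlow [MetricSpace X] (φ : ℝ → X → X) : EReal :=
  ⨆ (ε : ℝ) (_ : 0 < ε),
    Filter.limsup (fun T : ℝ => ((Real.log (sepFlow φ T ε) / T : ℝ) : EReal)) Filter.atTop

open MeasureTheory Topology BoundedContinuousFunction
open scoped ENNReal

lemma zIter_natCast [TopologicalSpace X] (f : X ≃ₜ X) (k : ℕ) (x : X) :
    zIter f k x = (⇑f)^[k] x := by
  simp [zIter]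

lemma exists_forall_le_dist_iterate_of_not_minimal [MetricSpace X] {f : X ≃ₜ X}
    (h : ¬ Minimal f) : ∃ x y : X, ∃ ε > 0, ∀ k : ℕ, ε ≤ dist ((⇑f)^[k] x) y := by
  simp only [Minimal, Metric.dense_iff, not_forall, not_nonempty_iff_eq_empty] at h
  obtain ⟨x, y, ε, hε, hempty⟩ := h
  refine ⟨x, y, ε, hε, fun k => not_lt.1 fun hk => ?_⟩
  exact (eq_empty_iff_forall_notMem.1 hempty) _ ⟨hk, k, zIter_natCast f k x⟩

lemma birkhoffAverage_comp (f : X → X) (g : X → ℝ) (n : ℕ) (x : X) :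
    birkhoffAverage ℝ f (g ∘ f) n x = birkhoffAverage ℝ f g n (f x) := by
  simp [birkhoffAverage, birkhoffSum, ← Function.iterate_succ_apply' f, Function.iterate_succ_apply]

lemma tendsto_birkhoffAverage_comp_sub [TopologicalSpace X] {f : X → X} (g : X →ᵇ ℝ)
    {ι : Type*} {L : Filter ι} {z : ι → X} {n : ι → ℕ} (hn : Tendsto n L atTop) :
    Tendsto (fun i => birkhoffAverage ℝ f (g ∘ f) (n i) (z i) - birkhoffAverage ℝ f g (n i) (z i))
      L (𝓝 0) := by
  have hbound : Tendsto (fun i => 2 * ‖g‖ / (n i : ℝ)) L (𝓝 0) :=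
    tendsto_const_nhds.div_atTop (tendsto_natCast_atTop_atTop.comp hn)
  refine squeeze_zero_norm (fun i => ?_) hbound
  rw [birkhoffAverage_comp, ← dist_eq_norm, dist_birkhoffAverage_apply_birkhoffAverage]
  gcongr
  exact g.dist_le_two_norm _ _

lemma mul_le_sum_range_of_le_apply {h : ℕ → ℝ} (hh : ∀ i, 0 ≤ h i) {s : ℕ → ℕ} {c : ℝ} :
    ∀ {k : ℕ}, (∀ j < k, s j < s (j + 1)) → (∀ j ≤ k, c ≤ h (s j)) →
      (k + 1) * c ≤ ∑ i ∈ Finset.range (s k + 1), h i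
  | 0, _, hc => by
    simpa using (hc 0 le_rfl).trans (Finset.single_le_sum (fun i _ => hh i)
      (Finset.self_mem_range_succ (s 0)))
  | k + 1, hs, hc => by
    have ih := mul_le_sum_range_of_le_apply hh (k := k) (fun j hj => hs j (by omega))
      (fun j hj => hc j (by omega))
    have hlast : c ≤ ∑ i ∈ Finset.Ico (s k + 1) (s (k + 1) + 1), h i :=
      (hc (k + 1) le_rfl).trans (Finset.single_le_sum (fun i _ => hh i)
        (Finset.mem_Ico.2 ⟨hs k (by omega), by omega⟩))
    rw [← Finset.sum_range_add_sum_Ico _ (Nat.succ_le_succ (hs k (by omega)).le)]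
    push_cast
    linarith

lemma le_and_le_mul_of_bounded_gaps {s : ℕ → ℕ} {M : ℕ} (h0 : s 0 = 0) :
    ∀ {k : ℕ}, (∀ j < k, s j < s (j + 1) ∧ s (j + 1) ≤ s j + M) → k ≤ s k ∧ s k ≤ k * M
  | 0, _ => by simp [h0]
  | k + 1, hgap => by
    have ih := le_and_le_mul_of_bounded_gaps h0 (k := k) fun j hj => hgap j (by omega)
    have := hgap k (by omega)
    constructor <;> nlinarith

section Gluing

variable [MetricSpace X] {f : X → X}

theorem GluingOrbit.exists_visits_with_bounded_gaps (hgo : GluingOrbit f) (y : X) {δ : ℝ}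
    (hδ : 0 < δ) :
    ∃ M : ℕ, 0 < M ∧ ∀ k : ℕ, ∃ z : X, ∃ s : ℕ → ℕ, s 0 = 0 ∧
      (∀ j < k, s j < s (j + 1) ∧ s (j + 1) ≤ s j + M) ∧ ∀ j ≤ k, dist (f^[s j] z) y < δ := by
  obtain ⟨M, hM, hglue⟩ := hgo δ hδ
  refine ⟨M, hM, fun k => ?_⟩
  obtain ⟨g, hg, z, hz⟩ := hglue (k + 1) k.succ_pos (fun _ => (y, 1)) fun _ _ => one_pos
  refine ⟨z, sTimes (fun _ => (y, 1)) g, rfl, fun j hj => ?_, fun j hj => ?_⟩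
  · have := hg j (by omega)
    simp only [sTimes]
    omega
  · simpa using hz j (by omega) 0 one_pos

theorem GluingOrbit.exists_le_birkhoffAverage (hgo : GluingOrbit f) (y : X) {δ : ℝ}
    (hδ : 0 < δ) :
    ∃ M : ℕ, 0 < M ∧ ∀ {g : X → ℝ} {c : ℝ}, 0 ≤ c → (∀ p, 0 ≤ g p) →
      (∀ p, dist p y < δ → c ≤ g p) →
        ∀ k : ℕ, ∃ z : X, ∃ n > k, c / M ≤ birkhoffAverage ℝ f g n z := by
  obtain ⟨M, hM, hvisit⟩ := hgo.exists_visits_with_bounded_gaps y hδ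
  refine ⟨M, hM, fun {g c} hc hg hgc k => ?_⟩
  obtain ⟨z, s, hs0, hgap, hdist⟩ := hvisit k
  obtain ⟨hks, hsk⟩ := le_and_le_mul_of_bounded_gaps hs0 hgap
  have hsum := mul_le_sum_range_of_le_apply (h := fun i => g (f^[i] z)) (fun i => hg _)
    (fun j hj => (hgap j hj).1) fun j hj => hgc _ (hdist j hj)
  have hlen : ((s k + 1 : ℕ) : ℝ) ≤ (k + 1) * M := by
    have : s k + 1 ≤ (k + 1) * M := by nlinarith
    exact_mod_cast this
  refine ⟨z, s k + 1, by omega, ?_⟩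
  rw [birkhoffAverage, birkhoffSum, smul_eq_mul, inv_mul_eq_div]
  calc c / M = (k + 1) * c / ((k + 1) * M) := by field_simp
    _ ≤ (k + 1) * c / (s k + 1 : ℕ) := by gcongr
    _ ≤ _ := by gcongr

end Gluing

section EmpiricalMeasure

variable [MeasurableSpace X]

noncomputable def empiricalMeasure (f : X → X) (n : ℕ) (x : X) : Measure X :=
  (n : ℝ≥0∞)⁻¹ • ∑ k ∈ Finset.range n, Measure.dirac (f^[k] x)

lemma isProbabilityMeasure_empiricalMeasure (f : X → X) {n : ℕ} (hn : n ≠ 0) (x : X) :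
    IsProbabilityMeasure (empiricalMeasure f n x) := by
  constructor
  simp [empiricalMeasure, ENNReal.inv_mul_cancel (Nat.cast_ne_zero.2 hn)]

lemma integral_empiricalMeasure [MeasurableSingletonClass X] (f : X → X) (g : X → ℝ) (n : ℕ)
    (x : X) : ∫ p, g p ∂empiricalMeasure f n x = birkhoffAverage ℝ f g n x := by
  rw [empiricalMeasure, integral_smul_measure,
    integral_finsetSum_measure fun k _ => integrable_dirac enorm_lt_top]
  simp [birkhoffAverage, birkhoffSum, integral_dirac]

variable [TopologicalSpace X] [HasOuterApproxClosed X] [BorelSpace X]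

theorem map_eq_self_of_tendsto_birkhoffAverage {f : X → X} (hf : Continuous f) {μ : Measure X}
    [IsFiniteMeasure μ] {ι : Type*} {L : Filter ι} [L.NeBot] {z : ι → X} {n : ι → ℕ}
    (hn : Tendsto n L atTop)
    (hμ : ∀ g : X →ᵇ ℝ, Tendsto (fun i => birkhoffAverage ℝ f g (n i) (z i)) L
      (𝓝 (∫ p, g p ∂μ))) :
    μ.map f = μ := by
  refine ext_of_forall_integral_eq_of_IsFiniteMeasure fun g => ?_
  rw [integral_map hf.aemeasurable g.continuous.aestronglyMeasurable]
  refine tendsto_nhds_unique (hμ (g.compContinuous ⟨f, hf⟩)) ?_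
  simpa using (tendsto_birkhoffAverage_comp_sub (f := f) (z := z) g hn).add (hμ g)

/-- Krylov–Bogolyubov: weak limit points of empirical measures along ever longer orbit segments
are invariant. -/
theorem exists_isProbabilityMeasure_map_eq_self_integral_mem [T2Space X] [CompactSpace X]
    {f : X → X} (hf : Continuous f) {z : ℕ → X} {n : ℕ → ℕ} (hn0 : ∀ k, n k ≠ 0)
    (hn : Tendsto n atTop atTop) (g : X →ᵇ ℝ) {S : Set ℝ} (hS : IsClosed S)
    (hgS : ∀ k, birkhoffAverage ℝ f g (n k) (z k) ∈ S) :
    ∃ μ : Measure X, IsProbabilityMeasure μ ∧ μ.map f = μ ∧ ∫ p, g p ∂μ ∈ S := by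
  let μs : ℕ → ProbabilityMeasure X := fun k =>
    ⟨empiricalMeasure f (n k) (z k), isProbabilityMeasure_empiricalMeasure f (hn0 k) (z k)⟩
  let 𝒰 := Ultrafilter.of (atTop : Filter ℕ)
  obtain ⟨μ, -, hμ⟩ := isCompact_univ.ultrafilter_le_nhds (𝒰.map μs) (by simp)
  have hint : ∀ g : X →ᵇ ℝ, Tendsto (fun k => birkhoffAverage ℝ f g (n k) (z k)) 𝒰
      (𝓝 (∫ p, g p ∂(μ : Measure X))) := by
    simpa [μs, integral_empiricalMeasure] using
      ProbabilityMeasure.tendsto_iff_forall_integral_tendsto.1 hμ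
  exact ⟨μ, inferInstance,
    map_eq_self_of_tendsto_birkhoffAverage hf (hn.mono_left (Ultrafilter.of_le _)) hint,
    hS.mem_of_tendsto (hint g) (Eventually.of_forall hgS)⟩

end EmpiricalMeasure

theorem stmt10 [MetricSpace X] [CompactSpace X] [MeasurableSpace X] [BorelSpace X]
    (f : X ≃ₜ X)
    (hue : ∃! μ : MeasureTheory.Measure X,
      MeasureTheory.IsProbabilityMeasure μ ∧ MeasureTheory.Measure.map (⇑f) μ = μ)
    (hgo : GluingOrbit (⇑f)) :
    Minimal f := by
  by_contra hmin
  obtain ⟨x, y, ε, hε, hfar⟩ := exists_forall_le_dist_iterate_of_not_minimal hmin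
  let g : X →ᵇ ℝ := mkOfCompact ⟨fun p => max (ε - dist p y) 0, by fun_prop⟩
  have hg0 : ∀ p, 0 ≤ g p := fun p => le_max_right _ _
  have hgy : ∀ p, dist p y < ε / 2 → ε / 2 ≤ g p := fun p hp => le_max_of_le_left (by linarith)
  obtain ⟨ν, hν, hνf, hνg⟩ := exists_isProbabilityMeasure_map_eq_self_integral_mem f.continuous
    (z := fun _ => x) (n := (· + 1)) (fun k => k.succ_ne_zero) (tendsto_add_atTop_nat 1) g
    (isClosed_singleton (x := 0)) fun k => by
      simp [birkhoffAverage, birkhoffSum, g, hfar]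
  obtain ⟨M, hM, hvisit⟩ := hgo.exists_le_birkhoffAverage y (half_pos hε)
  choose z n hkn hzn using hvisit (half_pos hε).le hg0 hgy
  obtain ⟨ρ, hρ, hρf, hρg⟩ := exists_isProbabilityMeasure_map_eq_self_integral_mem f.continuous
    (fun k => (Nat.zero_lt_of_lt (hkn k)).ne') (tendsto_atTop_mono (fun k => (hkn k).le)
      tendsto_id) g isClosed_Ici hzn
  obtain rfl := hue.unique ⟨hν, hνf⟩ ⟨hρ, hρf⟩
  have hpos : 0 < ε / 2 / M := by positivity
  exact hpos.not_ge (mem_singleton_iff.1 hνg ▸ hρg)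

end Paper
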